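/- Let B ∈ ℂ^{n×n}, let Q ∈ ℂ^{n×s} with Q*Q = I_s, and suppose BQ = U1 Σ1 V21* + U2 Σ2 V22* with U1, U2 ∈ ℂ^{n×s} satisfying U1*U1 = I_s, U2*U2 = I_s, U1*U2 = 0, Σ1, Σ2 ∈ ℝ^{s×s} real diagonal, and V21, V22 ∈ ℂ^{s×s}. Assume that Q* B* B Q is invertible and that ‖(Q* B* B Q)^{−1} V22 Σ2² V22*‖ < 1 in the spectral norm. Then V21 Σ1² V21* = Q* B* B Q ( I_s − (Q* B* B Q)^{−1} V22 Σ2² V22* ) is invertible, and in particular V21 is invertible. -/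

import Mathlib

/-!
The columns of `U₁` and `U₂` are orthonormal and mutually orthogonal, so the Gram matrix
`G = (BQ)ᴴ(BQ)` splits as `V₂₁ Σ₁² V₂₁ᴴ + V₂₂ Σ₂² V₂₂ᴴ`. Hence `V₂₁ Σ₁² V₂₁ᴴ = G - V₂₂ Σ₂² V₂₂ᴴ`
`= G (1 - G⁻¹ V₂₂ Σ₂² V₂₂ᴴ)`, a product of two units (the second by the Neumann series), and a
left factor of an invertible square matrix is invertible.
-/
open Matrix
open scoped Matrix.Norms.L2Operator

namespace Matrix

variable {m k l R : Type*} [Fintype m] [Fintype k] [DecidableEq k] [Semiring R] [StarRing R]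

theorem conjTranspose_mul_self_add_of_orthonormal {U₁ U₂ : Matrix m k R}
    (hU₁ : U₁ᴴ * U₁ = 1) (hU₂ : U₂ᴴ * U₂ = 1) (hU₁₂ : U₁ᴴ * U₂ = 0) (A C : Matrix k l R) :
    (U₁ * A + U₂ * C)ᴴ * (U₁ * A + U₂ * C) = Aᴴ * A + Cᴴ * C := by
  have hU₂₁ : U₂ᴴ * U₁ = 0 := by simpa using congrArg conjTranspose hU₁₂
  simp only [conjTranspose_add, conjTranspose_mul, Matrix.add_mul, Matrix.mul_add,
    Matrix.mul_assoc]
  rw [← Matrix.mul_assoc U₁ᴴ U₁, ← Matrix.mul_assoc U₁ᴴ U₂, ← Matrix.mul_assoc U₂ᴴ U₁,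
    ← Matrix.mul_assoc U₂ᴴ U₂, hU₁, hU₂, hU₁₂, hU₂₁]
  simp

theorem IsHermitian.conjTranspose_mul_self_of_mul_conjTranspose {D : Matrix k k R}
    (hD : D.IsHermitian) (V : Matrix l k R) : (D * Vᴴ)ᴴ * (D * Vᴴ) = V * D ^ 2 * Vᴴ := by
  rw [conjTranspose_mul, conjTranspose_conjTranspose, hD.eq, sq]
  simp only [Matrix.mul_assoc]

theorem conjTranspose_mul_self_of_svd_add {U₁ U₂ : Matrix m k R}
    (hU₁ : U₁ᴴ * U₁ = 1) (hU₂ : U₂ᴴ * U₂ = 1) (hU₁₂ : U₁ᴴ * U₂ = 0)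
    {D₁ D₂ : Matrix k k R} (hD₁ : D₁.IsHermitian) (hD₂ : D₂.IsHermitian) (V₁ V₂ : Matrix l k R) :
    (U₁ * D₁ * V₁ᴴ + U₂ * D₂ * V₂ᴴ)ᴴ * (U₁ * D₁ * V₁ᴴ + U₂ * D₂ * V₂ᴴ) =
      V₁ * D₁ ^ 2 * V₁ᴴ + V₂ * D₂ ^ 2 * V₂ᴴ := by
  simp only [Matrix.mul_assoc U₁, Matrix.mul_assoc U₂]
  rw [conjTranspose_mul_self_add_of_orthonormal hU₁ hU₂ hU₁₂,
    hD₁.conjTranspose_mul_self_of_mul_conjTranspose,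
    hD₂.conjTranspose_mul_self_of_mul_conjTranspose]

end Matrix

theorem V21_invertible_of_small_tail {n s : ℕ}
    (B : Matrix (Fin n) (Fin n) ℂ) (Q U₁ U₂ : Matrix (Fin n) (Fin s) ℂ)
    (σ₁ σ₂ : Fin s → ℝ) (V₂₁ V₂₂ : Matrix (Fin s) (Fin s) ℂ)
    (hU₁ : U₁ᴴ * U₁ = 1) (hU₂ : U₂ᴴ * U₂ = 1) (hU₁₂ : U₁ᴴ * U₂ = 0)
    (hBQ : B * Q = U₁ * Matrix.diagonal (fun i => (σ₁ i : ℂ)) * V₂₁ᴴ +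
      U₂ * Matrix.diagonal (fun i => (σ₂ i : ℂ)) * V₂₂ᴴ)
    (hG : IsUnit (Qᴴ * Bᴴ * B * Q))
    (hsmall : ‖(Qᴴ * Bᴴ * B * Q)⁻¹ *
      (V₂₂ * Matrix.diagonal (fun i => (σ₂ i : ℂ)) ^ 2 * V₂₂ᴴ)‖ < 1) :
    V₂₁ * Matrix.diagonal (fun i => (σ₁ i : ℂ)) ^ 2 * V₂₁ᴴ =
        Qᴴ * Bᴴ * B * Q *
          (1 - (Qᴴ * Bᴴ * B * Q)⁻¹ *
            (V₂₂ * Matrix.diagonal (fun i => (σ₂ i : ℂ)) ^ 2 * V₂₂ᴴ)) ∧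
      IsUnit (V₂₁ * Matrix.diagonal (fun i => (σ₁ i : ℂ)) ^ 2 * V₂₁ᴴ) ∧
      IsUnit V₂₁ := by
  set G := Qᴴ * Bᴴ * B * Q
  set D₁ := Matrix.diagonal fun i => (σ₁ i : ℂ)
  set D₂ := Matrix.diagonal fun i => (σ₂ i : ℂ)
  have hD : ∀ σ : Fin s → ℝ, (Matrix.diagonal fun i => (σ i : ℂ)).IsHermitian := fun σ =>
    isHermitian_diagonal_of_self_adjoint _ (by ext; simp)
  have hgram : G = V₂₁ * D₁ ^ 2 * V₂₁ᴴ + V₂₂ * D₂ ^ 2 * V₂₂ᴴ := by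
    rw [← conjTranspose_mul_self_of_svd_add hU₁ hU₂ hU₁₂ (hD σ₁) (hD σ₂), ← hBQ]
    simp only [G, conjTranspose_mul, Matrix.mul_assoc]
  have hfactor : V₂₁ * D₁ ^ 2 * V₂₁ᴴ = G * (1 - G⁻¹ * (V₂₂ * D₂ ^ 2 * V₂₂ᴴ)) := by
    rw [Matrix.mul_sub, Matrix.mul_one,
      mul_nonsing_inv_cancel_left _ _ ((isUnit_iff_isUnit_det G).mp hG), hgram,
      add_sub_cancel_right]
  have hunit : IsUnit (V₂₁ * D₁ ^ 2 * V₂₁ᴴ) := hfactor ▸ hG.mul (Units.oneSub _ hsmall).isUnit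
  exact ⟨hfactor, hunit, isUnit_of_mul_isUnit_left (isUnit_of_mul_isUnit_left hunit)⟩
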